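/- Fix α > 0, b > 0 and t ∈ ℝ. Then lim_{n→∞} [ log Γ(nα + √n·b·t) − log Γ(nα) − √n·b·t·log(nα) ] = b²t²/(2α), where Γ is the Gamma function. -/

import Mathlib

/-!
Log-convexity of `Γ` and `Γ(v + 1) = v Γ(v)` squeeze the derivative of `log Γ` between
`log (v - 1)` and `log v`, so by the mean value inequality `log Γ` differs from the antiderivative
`v log v - v` of `log` by a function whose increments over `[x, x + s]` are `O(|s| / x)`.
The increment of `v log v - v` minus `s log x` equals `x φ(s / x)` with
`φ(u) = (1 + u) log (1 + u) - u = u² / 2 + O(u³)`, which is `s² / (2x) + O(s³ / x²)`.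
With `x = nα` and `s = √n b t` we have `s² / x = b² t² / α` and `s / x → 0`.
-/

open Filter Topology

namespace Real

lemma log_Gamma_add_one {v : ℝ} (hv : 0 < v) : log (Gamma (v + 1)) = log (Gamma v) + log v := by
  rw [Gamma_add_one hv.ne', log_mul hv.ne' (Gamma_pos_of_pos hv).ne', add_comm]

lemma differentiableAt_log_Gamma {v : ℝ} (hv : 0 < v) : DifferentiableAt ℝ (log ∘ Gamma) v :=
  (differentiableAt_log (Gamma_pos_of_pos hv).ne').comp v
    (differentiableAt_Gamma fun m => by linarith [(m.cast_nonneg : (0 : ℝ) ≤ m)])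

lemma deriv_log_Gamma_le {v : ℝ} (hv : 0 < v) : deriv (log ∘ Gamma) v ≤ log v := by
  have h := convexOn_log_Gamma.deriv_le_slope hv (show 0 < v + 1 by linarith) (by linarith)
    (differentiableAt_log_Gamma hv)
  rwa [slope_def_field, add_sub_cancel_left, div_one, Function.comp_apply, Function.comp_apply,
    log_Gamma_add_one hv, add_sub_cancel_left] at h

lemma log_sub_one_le_deriv_log_Gamma {v : ℝ} (hv : 1 < v) :
    log (v - 1) ≤ deriv (log ∘ Gamma) v := by
  have hv' : 0 < v - 1 := by linarith
  have h := convexOn_log_Gamma.slope_le_deriv hv' (show 0 < v by linarith) (by linarith)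
    (differentiableAt_log_Gamma (by linarith))
  have hΓ := log_Gamma_add_one hv'
  rw [sub_add_cancel] at hΓ
  rwa [slope_def_field, sub_sub_cancel, div_one, Function.comp_apply, Function.comp_apply, hΓ,
    add_sub_cancel_left] at h

lemma log_sub_log_sub_one_le {v : ℝ} (hv : 1 < v) : log v - log (v - 1) ≤ (v - 1)⁻¹ := by
  have hv' : 0 < v - 1 := by linarith
  rw [← log_div (by linarith) hv'.ne']
  calc log (v / (v - 1)) ≤ v / (v - 1) - 1 := log_le_sub_one_of_pos (by positivity)
    _ = (v - 1)⁻¹ := by field_simp; ring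

lemma abs_log_Gamma_sub_log_Gamma_sub_le {a x y : ℝ} (ha : 1 < a) (hx : a ≤ x) (hy : a ≤ y) :
    |log (Gamma y) - log (Gamma x) - ((y * log y - y) - (x * log x - x))| ≤ |y - x| / (a - 1) := by
  have hderiv : ∀ v ∈ Set.Ici a, HasDerivWithinAt (fun v => log (Gamma v) - (v * log v - v))
      (deriv (log ∘ Gamma) v - log v) (Set.Ici a) v := by
    intro v hv
    have hv0 : 0 < v := by linarith [hv.out]
    have h := (differentiableAt_log_Gamma hv0).hasDerivAt.sub
      ((hasDerivAt_mul_log hv0.ne').sub (hasDerivAt_id v))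
    exact (h.congr_deriv (by ring)).hasDerivWithinAt
  have hbound : ∀ v ∈ Set.Ici a, ‖deriv (log ∘ Gamma) v - log v‖ ≤ (a - 1)⁻¹ := by
    intro v hv
    have hv1 : 1 < v := by linarith [hv.out]
    rw [norm_eq_abs, abs_sub_comm, abs_of_nonneg (sub_nonneg.2 (deriv_log_Gamma_le (by linarith)))]
    calc log v - deriv (log ∘ Gamma) v ≤ log v - log (v - 1) := by
          linarith [log_sub_one_le_deriv_log_Gamma hv1]
      _ ≤ (v - 1)⁻¹ := log_sub_log_sub_one_le hv1
      _ ≤ (a - 1)⁻¹ := inv_anti₀ (by linarith) (by linarith [hv.out])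
  have h := (convex_Ici a).norm_image_sub_le_of_norm_hasDerivWithin_le hderiv hbound hx hy
  rw [norm_eq_abs, norm_eq_abs] at h
  convert h using 2 <;> ring

lemma abs_log_one_add_sub_le {u : ℝ} (hu : |u| ≤ 1 / 2) :
    |log (1 + u) - u + u ^ 2 / 2| ≤ 2 * |u| ^ 3 := by
  have h := abs_log_sub_add_sum_range_le (show |-u| < 1 by rw [abs_neg]; linarith) 2
  simp only [Finset.sum_range_succ, Finset.sum_range_zero, abs_neg, sub_neg_eq_add] at h
  calc |log (1 + u) - u + u ^ 2 / 2| ≤ |u| ^ 3 / (1 - |u|) := by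
        convert h using 2; push_cast; ring
    _ ≤ 2 * |u| ^ 3 := by
        rw [div_le_iff₀ (by linarith)]; nlinarith [pow_nonneg (abs_nonneg u) 3]

lemma abs_one_add_mul_log_one_add_sub_le {u : ℝ} (hu : |u| ≤ 1 / 2) :
    |(1 + u) * log (1 + u) - u - u ^ 2 / 2| ≤ 4 * |u| ^ 3 := by
  set r := log (1 + u) - u + u ^ 2 / 2
  have hr := abs_log_one_add_sub_le hu
  have h1u : |1 + u| ≤ 3 / 2 := (abs_add_le _ _).trans (by rw [abs_one]; linarith)
  calc |(1 + u) * log (1 + u) - u - u ^ 2 / 2| = |(1 + u) * r - u ^ 3 / 2| := by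
        congr 1; simp only [r]; ring
    _ ≤ |1 + u| * |r| + |u| ^ 3 / 2 := by
        rw [← abs_mul]
        refine (abs_sub _ _).trans (le_of_eq ?_)
        rw [abs_div, abs_pow, abs_two]
    _ ≤ 3 / 2 * (2 * |u| ^ 3) + |u| ^ 3 / 2 := by gcongr
    _ ≤ 4 * |u| ^ 3 := by nlinarith [pow_nonneg (abs_nonneg u) 3]

lemma abs_log_Gamma_add_sub_sub_le {x s : ℝ} (hx : 4 ≤ x) (hs : |s / x| ≤ 1 / 2) :
    |log (Gamma (x + s)) - log (Gamma x) - s * log x - s ^ 2 / x / 2|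
      ≤ 4 * |s / x| * (1 + s ^ 2 / x) := by
  have hx0 : 0 < x := by linarith
  set u := s / x with hu_def
  have hsu : s = x * u := by rw [hu_def]; field_simp
  have hu1 : 0 < 1 + u := by linarith [neg_abs_le u]
  have hE := abs_log_Gamma_sub_log_Gamma_sub_le (a := x / 2) (x := x) (y := x + s) (by linarith)
    (by linarith) (by rw [hsu]; nlinarith [neg_abs_le u])
  have hE' : |x + s - x| / (x / 2 - 1) ≤ 4 * |u| := by
    rw [add_sub_cancel_left, div_le_iff₀ (by linarith), hsu, abs_mul, abs_of_pos hx0]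
    nlinarith [abs_nonneg u]
  have hmain : (x + s) * log (x + s) - (x + s) - (x * log x - x) - s * log x - s ^ 2 / x / 2
      = x * ((1 + u) * log (1 + u) - u - u ^ 2 / 2) := by
    rw [hsu, show x + x * u = x * (1 + u) by ring, log_mul hx0.ne' hu1.ne']
    field_simp
    ring
  calc |log (Gamma (x + s)) - log (Gamma x) - s * log x - s ^ 2 / x / 2|
      = |(log (Gamma (x + s)) - log (Gamma x) - (((x + s) * log (x + s) - (x + s))
          - (x * log x - x))) + x * ((1 + u) * log (1 + u) - u - u ^ 2 / 2)| := by
        rw [← hmain]; ring_nf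
    _ ≤ 4 * |u| + x * (4 * |u| ^ 3) := by
        refine (abs_add_le _ _).trans (add_le_add (hE.trans hE') ?_)
        rw [abs_mul, abs_of_pos hx0]
        exact mul_le_mul_of_nonneg_left (abs_one_add_mul_log_one_add_sub_le hs) hx0.le
    _ = 4 * |u| * (1 + s ^ 2 / x) := by
        rw [hsu, pow_succ, sq_abs]; field_simp

lemma tendsto_log_Gamma_add_sub_log_Gamma_sub_mul_log {ι : Type*} {l : Filter ι} {x s : ι → ℝ}
    {c : ℝ} (hx : Tendsto x l atTop) (hc : Tendsto (fun i => s i ^ 2 / x i) l (𝓝 c)) :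
    Tendsto (fun i => log (Gamma (x i + s i)) - log (Gamma (x i)) - s i * log (x i)) l
      (𝓝 (c / 2)) := by
  have hu : Tendsto (fun i => |s i / x i|) l (𝓝 0) := by
    have hsq : Tendsto (fun i => (s i / x i) ^ 2) l (𝓝 0) := by
      have h := hc.mul (tendsto_inv_atTop_zero.comp hx)
      rw [mul_zero] at h
      exact h.congr fun i => by simp only [Function.comp_apply]; ring
    simpa [Function.comp_def, sqrt_sq_eq_abs] using (continuous_sqrt.tendsto 0).comp hsq
  have hbound : Tendsto (fun i => 4 * |s i / x i| * (1 + s i ^ 2 / x i)) l (𝓝 0) := by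
    simpa using (hu.const_mul 4).mul (hc.const_add 1)
  have herr : Tendsto (fun i => log (Gamma (x i + s i)) - log (Gamma (x i)) - s i * log (x i)
      - s i ^ 2 / x i / 2) l (𝓝 0) := by
    refine squeeze_zero_norm' ?_ hbound
    filter_upwards [hx.eventually_ge_atTop 4, hu.eventually (ge_mem_nhds one_half_pos)]
      with i hxi hui
    exact abs_log_Gamma_add_sub_sub_le hxi hui
  simpa using herr.add (hc.div_const 2)

end Real

theorem stmt_6_general (α b t : ℝ) (hα : 0 < α) :
    Filter.Tendsto
      (fun n : ℕ =>
        Real.log (Real.Gamma ((n : ℝ) * α + Real.sqrt n * b * t))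
          - Real.log (Real.Gamma ((n : ℝ) * α))
          - Real.sqrt n * b * t * Real.log ((n : ℝ) * α))
      Filter.atTop (nhds (b ^ 2 * t ^ 2 / (2 * α))) := by
  have hc : Tendsto (fun n : ℕ => (√n * b * t) ^ 2 / (n * α)) atTop (𝓝 (b ^ 2 * t ^ 2 / α)) := by
    refine tendsto_const_nhds.congr' ?_
    filter_upwards [eventually_ne_atTop 0] with n hn
    rw [mul_pow, mul_pow, Real.sq_sqrt n.cast_nonneg]
    field_simp
  convert Real.tendsto_log_Gamma_add_sub_log_Gamma_sub_mul_log
    (tendsto_natCast_atTop_atTop.atTop_mul_const hα) hc using 2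
  ring

/-- Stirling-type limit: `log Γ(nα + √n·b·t) − log Γ(nα) − √n·b·t·log(nα) → b²t²/(2α)`. -/
theorem stmt_6 (α b t : ℝ) (hα : 0 < α) (hb : 0 < b) :
    Filter.Tendsto
      (fun n : ℕ =>
        Real.log (Real.Gamma ((n : ℝ) * α + Real.sqrt n * b * t))
          - Real.log (Real.Gamma ((n : ℝ) * α))
          - Real.sqrt n * b * t * Real.log ((n : ℝ) * α))
      Filter.atTop (nhds (b ^ 2 * t ^ 2 / (2 * α))) :=
  stmt_6_general α b t hα
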